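/- arXiv:1811.08582 — 2 statements merged into one kernel-verified Lean document; each statement's English description precedes it below -/
import Mathlib

section
/- Let q > 0, let θ_1 ≥ θ_2 ≥ ... ≥ θ_K be nonincreasing real numbers, and let E: [0,1] → ℝ be convex with E(0) = 0. Define a(f) = q · Σ_{k=1}^K θ_k [E(Q_k/q) − E(Q_{k−1}/q)] on the simplex {f ∈ ℝ^K : f_i ≥ 0, Σ f_i = q}, where Q_k = Σ_{j≤k} f_j, Q_0 = 0. Then a is a convex function of f. -/
/-!
Summation by parts rewrites `Σ_k θ_k (E(Q_{k+1}/q) - E(Q_k/q))` as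
`Σ_k (θ_k - θ_{k+1}) E(Q_{k+1}/q)` plus the boundary terms `θ_{K-1} E(Q_K/q) - θ_0 E(0)`,
which are constant on the simplex since `Q_K = q` there. The weights `θ_k - θ_{k+1}` are
nonnegative, and each `f ↦ E(Q_k/q)` is convex as a convex function of a linear map that sends
the simplex into `[0, 1]`.
-/

open Finset

theorem ConvexOn.fun_sum {ι 𝕜 E β : Type*} [Semiring 𝕜] [PartialOrder 𝕜] [AddCommMonoid E]
    [AddCommMonoid β] [PartialOrder β] [IsOrderedAddMonoid β] [SMul 𝕜 E] [Module 𝕜 β]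
    {s : Set E} {t : Finset ι} {f : ι → E → β} (hs : Convex 𝕜 s)
    (hf : ∀ i ∈ t, ConvexOn 𝕜 s (f i)) : ConvexOn 𝕜 s fun x => ∑ i ∈ t, f i x := by
  simpa only [Finset.sum_fn] using
    Finset.sum_induction f (ConvexOn 𝕜 s) (fun _ _ => ConvexOn.add) (convexOn_const 0 hs) hf

theorem convexOn_sum_mul_sub_of_antitone {E : Type*} [AddCommGroup E] [Module ℝ E] {s : Set E}
    {K : ℕ} {θ : ℕ → ℝ} {g : ℕ → E → ℝ} {c₀ c₁ : ℝ}
    (hθ : ∀ k, k + 1 < K → θ (k + 1) ≤ θ k) (hg : ∀ k ≤ K, ConvexOn ℝ s (g k))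
    (hg₀ : ∀ x ∈ s, g 0 x = c₀) (hgK : ∀ x ∈ s, g K x = c₁) :
    ConvexOn ℝ s fun x => ∑ k ∈ range K, θ k * (g (k + 1) x - g k x) := by
  have hs : Convex ℝ s := (hg 0 K.zero_le).1
  have hlevels : ConvexOn ℝ s fun x =>
      ∑ k ∈ range (K - 1), (θ k - θ (k + 1)) * (g (k + 1) x - c₀) := by
    refine ConvexOn.fun_sum hs fun k hk => ?_
    have hk : k + 1 < K := by grind
    simpa only [sub_eq_add_neg, Pi.add_apply, smul_eq_mul] using
      ((hg (k + 1) hk.le).add_const (-c₀)).smul (sub_nonneg.2 (hθ k hk))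
  refine (hlevels.add_const (θ (K - 1) * (c₁ - c₀))).congr fun x hx => ?_
  have hparts := sum_range_by_parts θ (fun k => g (k + 1) x - g k x) K
  simp only [smul_eq_mul, sum_range_sub (fun k => g k x), hg₀ x hx, hgK x hx] at hparts
  rw [Pi.add_apply, hparts, sub_eq_add_neg _ (∑ _ ∈ _, _), ← sum_neg_distrib, add_comm]
  congr 1
  exact sum_congr rfl fun k _ => by ring

def flowSimplex (K : ℕ) (q : ℝ) : Set (ℕ → ℝ) :=
  {f | (∀ i < K, 0 ≤ f i) ∧ ∑ i ∈ range K, f i = q}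

theorem convex_flowSimplex (K : ℕ) (q : ℝ) : Convex ℝ (flowSimplex K q) := by
  have hnonneg : Convex ℝ {f : ℕ → ℝ | ∀ i < K, 0 ≤ f i} := by
    simp only [Set.ofPred_forall]
    exact convex_iInter₂ fun i _ => convex_halfSpace_ge (LinearMap.proj i).isLinear 0
  have hsum : Convex ℝ {f : ℕ → ℝ | ∑ i ∈ range K, f i = q} := by
    simpa using convex_hyperplane (∑ i ∈ range K, LinearMap.proj (R := ℝ) i).isLinear q
  exact hnonneg.inter hsum

theorem partialSum_div_mem_Icc {K k : ℕ} {q : ℝ} {f : ℕ → ℝ} (hf : f ∈ flowSimplex K q)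
    (hk : k ≤ K) : (∑ j ∈ range k, f j) / q ∈ Set.Icc (0 : ℝ) 1 := by
  have hnonneg : ∀ j ∈ range K, 0 ≤ f j := fun j hj => hf.1 j (mem_range.1 hj)
  have hq : 0 ≤ q := hf.2 ▸ sum_nonneg hnonneg
  have hle : ∑ j ∈ range k, f j ≤ q :=
    hf.2 ▸ sum_le_sum_of_subset_of_nonneg (range_subset_range.2 hk) fun j hj _ => hnonneg j hj
  exact ⟨div_nonneg (sum_nonneg fun j hj => hnonneg j (range_subset_range.2 hk hj)) hq,
    div_le_one_of_le₀ hle hq⟩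

theorem convexOn_flowSimplex_comp_partialSum_div {K k : ℕ} {q : ℝ} {E : ℝ → ℝ}
    (hE : ConvexOn ℝ (Set.Icc 0 1) E) (hk : k ≤ K) :
    ConvexOn ℝ (flowSimplex K q) fun f => E ((∑ j ∈ range k, f j) / q) := by
  let L : (ℕ → ℝ) →ₗ[ℝ] ℝ := q⁻¹ • ∑ j ∈ range k, LinearMap.proj j
  have hL : ∀ f, L f = (∑ j ∈ range k, f j) / q := fun f => by
    simp [L, div_eq_inv_mul]
  have hmaps : flowSimplex K q ⊆ L ⁻¹' Set.Icc 0 1 := fun f hf =>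
    show L f ∈ _ from hL f ▸ partialSum_div_mem_Icc hf hk
  simpa only [Function.comp_def, hL] using
    (hE.comp_linearMap L).subset hmaps (convex_flowSimplex K q)

theorem stmt_6_general (K : ℕ) (q : ℝ) (hq : 0 < q) (θ : ℕ → ℝ) (E : ℝ → ℝ)
    (hθ : ∀ k, k + 1 < K → θ (k + 1) ≤ θ k)
    (hE : ConvexOn ℝ (Set.Icc 0 1) E) :
    ConvexOn ℝ
      {f : ℕ → ℝ | (∀ i < K, 0 ≤ f i) ∧ ∑ i ∈ Finset.range K, f i = q}
      (fun f => q * ∑ k ∈ Finset.range K,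
        θ k * (E ((∑ j ∈ Finset.range (k + 1), f j) / q)
              - E ((∑ j ∈ Finset.range k, f j) / q))) := by
  have hcost := convexOn_sum_mul_sub_of_antitone (c₀ := E 0) (c₁ := E 1) hθ
    (fun k hk => convexOn_flowSimplex_comp_partialSum_div hE hk)
    (fun f _ => by rw [sum_range_zero, zero_div]) (fun f hf => by rw [hf.2, div_self hq.ne'])
  exact hcost.smul hq.le

/-- The electricity-cost term a(f) = q·Σ_k θ_k [E(Q_k/q) − E(Q_{k−1}/q)], with Q_k the
cumulative flows, nonincreasing prices θ and convex E with E(0) = 0, is convex on the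
flow simplex {f ≥ 0, Σ f = q}. (Paths are indexed 0,…,K−1 here.) -/
theorem stmt_6 (K : ℕ) (q : ℝ) (hq : 0 < q) (θ : ℕ → ℝ) (E : ℝ → ℝ)
    (hθ : ∀ k, k + 1 < K → θ (k + 1) ≤ θ k)
    (hE : ConvexOn ℝ (Set.Icc 0 1) E) (hE0 : E 0 = 0) :
    ConvexOn ℝ
      {f : ℕ → ℝ | (∀ i < K, 0 ≤ f i) ∧ ∑ i ∈ Finset.range K, f i = q}
      (fun f => q * ∑ k ∈ Finset.range K,
        θ k * (E ((∑ j ∈ Finset.range (k + 1), f j) / q)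
              - E ((∑ j ∈ Finset.range k, f j) / q))) :=
  stmt_6_general K q hq θ E hθ hE
end

section
/- In the user-equilibrium optimization problem, if the station wait-time functions T_j(λ_j) are strictly convex univariate functions of λ_j and the electricity price differences θ^k_{od} − θ^{k+1}_{od} are strictly positive with G^{-1} strictly increasing, then the minimizer f is unique; consequently the equilibrium path flows and the energy thresholds G^{-1}(Q^i_{od}/q_{od}) are unique. -/
open MeasureTheory

private lemma stmt11_tele (a b : ℕ → ℝ) (n : ℕ) :
    ∑ i ∈ Finset.range n, a i * (b (i+1) - b i)
      = ∑ i ∈ Finset.range n, (a i - a (i+1)) * b (i+1) + a n * b n - a 0 * b 0 := by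
  induction n with
  | zero => simp
  | succ n ih => rw [Finset.sum_range_succ, Finset.sum_range_succ, ih]; ring

private lemma stmt11_seg_le {φ : ℝ → ℝ} {d u v : ℝ} (hm : MonotoneOn φ (Set.Icc 0 d))
    (hu : u ∈ Set.Icc (0:ℝ) d) (hv : v ∈ Set.Icc (0:ℝ) d) (huv : u ≤ v) :
    ∫ s in u..((u+v)/2), φ s ≤ ∫ s in ((u+v)/2)..v, φ s := by
  set m := (u+v)/2 with hmdef
  have hum : u ≤ m := by simp [hmdef]; linarith
  have hmv : m ≤ v := by simp [hmdef]; linarith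
  have hmem : m ∈ Set.Icc (0:ℝ) d := ⟨by linarith [hu.1], by linarith [hv.2]⟩
  have hsub1 : Set.uIcc u m ⊆ Set.Icc 0 d := by
    rw [Set.uIcc_of_le hum]; exact Set.Icc_subset_Icc hu.1 hmem.2
  have hsub2 : Set.uIcc m v ⊆ Set.Icc 0 d := by
    rw [Set.uIcc_of_le hmv]; exact Set.Icc_subset_Icc hmem.1 hv.2
  have hint1 : IntervalIntegrable φ volume u m := (hm.mono hsub1).intervalIntegrable
  have hint2 : IntervalIntegrable φ volume m v := (hm.mono hsub2).intervalIntegrable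
  have h1 : ∫ s in u..m, φ s ≤ ∫ s in u..m, φ m := by
    apply intervalIntegral.integral_mono_on hum hint1 intervalIntegrable_const
    intro s hs
    exact hm (hsub1 (by rw [Set.uIcc_of_le hum]; exact hs)) hmem hs.2
  have h2 : ∫ s in m..v, φ m ≤ ∫ s in m..v, φ s := by
    apply intervalIntegral.integral_mono_on hmv intervalIntegrable_const hint2
    intro s hs
    exact hm hmem (hsub2 (by rw [Set.uIcc_of_le hmv]; exact hs)) hs.1
  rw [intervalIntegral.integral_const] at h1 h2
  have : (m - u) = (v - m) := by rw [hmdef]; ring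
  rw [this] at h1
  simp only [smul_eq_mul] at h1 h2
  linarith [h1, h2]

private lemma stmt11_mid_le {φ : ℝ → ℝ} {d u v : ℝ} (hm : MonotoneOn φ (Set.Icc 0 d))
    (hu : u ∈ Set.Icc (0:ℝ) d) (hv : v ∈ Set.Icc (0:ℝ) d) :
    ∫ s in (0:ℝ)..((u+v)/2), φ s ≤ ((∫ s in (0:ℝ)..u, φ s) + ∫ s in (0:ℝ)..v, φ s)/2 := by
  have hInt : ∀ a b : ℝ, a ∈ Set.Icc (0:ℝ) d → b ∈ Set.Icc (0:ℝ) d →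
      IntervalIntegrable φ volume a b := by
    intro a b ha hb
    exact (hm.mono (Set.uIcc_subset_Icc ha hb)).intervalIntegrable
  have h0 : (0:ℝ) ∈ Set.Icc (0:ℝ) d := ⟨le_refl _, le_trans hu.1 hu.2⟩
  rcases le_total u v with huv | huv
  · have hmem : (u+v)/2 ∈ Set.Icc (0:ℝ) d := ⟨by linarith [hu.1, hv.1], by linarith [hu.2, hv.2]⟩
    have e1 : (∫ s in (0:ℝ)..u, φ s) + ∫ s in u..((u+v)/2), φ s = ∫ s in (0:ℝ)..((u+v)/2), φ s :=
      intervalIntegral.integral_add_adjacent_intervals (hInt 0 u h0 hu) (hInt u _ hu hmem)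
    have e2 : (∫ s in (0:ℝ)..((u+v)/2), φ s) + ∫ s in ((u+v)/2)..v, φ s = ∫ s in (0:ℝ)..v, φ s :=
      intervalIntegral.integral_add_adjacent_intervals (hInt 0 _ h0 hmem) (hInt _ v hmem hv)
    have := stmt11_seg_le hm hu hv huv
    linarith
  · have hmem : (u+v)/2 ∈ Set.Icc (0:ℝ) d := ⟨by linarith [hu.1, hv.1], by linarith [hu.2, hv.2]⟩
    have e1 : (∫ s in (0:ℝ)..v, φ s) + ∫ s in v..((u+v)/2), φ s = ∫ s in (0:ℝ)..((u+v)/2), φ s := by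
      have hcomm : (v+u)/2 = (u+v)/2 := by ring
      simpa [hcomm] using intervalIntegral.integral_add_adjacent_intervals (hInt 0 v h0 hv)
        (hInt v ((v+u)/2) hv (by simpa [hcomm] using hmem))
    have e2 : (∫ s in (0:ℝ)..((u+v)/2), φ s) + ∫ s in ((u+v)/2)..u, φ s = ∫ s in (0:ℝ)..u, φ s :=
      intervalIntegral.integral_add_adjacent_intervals (hInt 0 _ h0 hmem) (hInt _ u hmem hu)
    have := stmt11_seg_le hm hv hu huv
    have hcomm : (v+u)/2 = (u+v)/2 := by ring
    rw [hcomm] at this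
    linarith

private lemma stmt11_mid_lt {φ : ℝ → ℝ} {d u v : ℝ} (hsm : StrictMonoOn φ (Set.Icc 0 d))
    (hu : u ∈ Set.Icc (0:ℝ) d) (hv : v ∈ Set.Icc (0:ℝ) d) (hne : u ≠ v) :
    ∫ s in (0:ℝ)..((u+v)/2), φ s < ((∫ s in (0:ℝ)..u, φ s) + ∫ s in (0:ℝ)..v, φ s)/2 := by
  have hm := hsm.monotoneOn
  have hInt : ∀ a b : ℝ, a ∈ Set.Icc (0:ℝ) d → b ∈ Set.Icc (0:ℝ) d →
      IntervalIntegrable φ volume a b := fun a b ha hb =>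
    (hm.mono (Set.uIcc_subset_Icc ha hb)).intervalIntegrable
  have h0 : (0:ℝ) ∈ Set.Icc (0:ℝ) d := ⟨le_refl _, le_trans hu.1 hu.2⟩
  have core : ∀ u v : ℝ, u ∈ Set.Icc (0:ℝ) d → v ∈ Set.Icc (0:ℝ) d → u < v →
      ∫ s in (0:ℝ)..((u+v)/2), φ s < ((∫ s in (0:ℝ)..u, φ s) + ∫ s in (0:ℝ)..v, φ s)/2 := by
    intro u v hu hv huv
    set m := (u+v)/2 with hmdef
    set c := (m+v)/2 with hcdef
    have hum : u < m := by rw [hmdef]; linarith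
    have hmc : m < c := by rw [hcdef]; linarith
    have hcv : c < v := by rw [hcdef, hmdef]; linarith
    have hmmem : m ∈ Set.Icc (0:ℝ) d := ⟨by linarith [hu.1], by linarith [hv.2]⟩
    have hcmem : c ∈ Set.Icc (0:ℝ) d := ⟨by linarith [hmmem.1], by linarith [hv.2]⟩
    have h1 : ∫ s in u..m, φ s ≤ (m - u) * φ m := by
      have := intervalIntegral.integral_mono_on hum.le (hInt u m hu hmmem) intervalIntegrable_const
        (g := fun _ => φ m) (fun s hs => hm ⟨by linarith [hu.1, hs.1], by linarith [hmmem.2, hs.2]⟩ hmmem hs.2)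
      simpa [intervalIntegral.integral_const, smul_eq_mul] using this
    have h2 : (c - m) * φ m ≤ ∫ s in m..c, φ s := by
      have := intervalIntegral.integral_mono_on hmc.le intervalIntegrable_const (hInt m c hmmem hcmem)
        (f := fun _ => φ m) (fun s hs => hm hmmem ⟨by linarith [hmmem.1, hs.1], by linarith [hcmem.2, hs.2]⟩ hs.1)
      simpa [intervalIntegral.integral_const, smul_eq_mul] using this
    have h3 : (v - c) * φ c ≤ ∫ s in c..v, φ s := by
      have := intervalIntegral.integral_mono_on hcv.le intervalIntegrable_const (hInt c v hcmem hv)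
        (f := fun _ => φ c) (fun s hs => hm hcmem ⟨by linarith [hcmem.1, hs.1], by linarith [hv.2, hs.2]⟩ hs.1)
      simpa [intervalIntegral.integral_const, smul_eq_mul] using this
    have hφ : φ m < φ c := hsm hmmem hcmem hmc
    have e1 : (∫ s in (0:ℝ)..u, φ s) + ∫ s in u..m, φ s = ∫ s in (0:ℝ)..m, φ s :=
      intervalIntegral.integral_add_adjacent_intervals (hInt 0 u h0 hu) (hInt u m hu hmmem)
    have e2 : (∫ s in (0:ℝ)..m, φ s) + ∫ s in m..c, φ s = ∫ s in (0:ℝ)..c, φ s :=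
      intervalIntegral.integral_add_adjacent_intervals (hInt 0 m h0 hmmem) (hInt m c hmmem hcmem)
    have e3 : (∫ s in (0:ℝ)..c, φ s) + ∫ s in c..v, φ s = ∫ s in (0:ℝ)..v, φ s :=
      intervalIntegral.integral_add_adjacent_intervals (hInt 0 c h0 hcmem) (hInt c v hcmem hv)
    have key : ∫ s in u..m, φ s < (∫ s in m..c, φ s) + ∫ s in c..v, φ s := by
      have hlen : m - u = (c - m) + (v - c) := by rw [hcdef, hmdef]; ring
      have h4 : (m - u) * φ m = (c - m) * φ m + (v - c) * φ m := by rw [hlen]; ring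
      have h5 : (v - c) * φ m < (v - c) * φ c := mul_lt_mul_of_pos_left hφ (by linarith)
      linarith
    linarith
  rcases lt_or_gt_of_ne hne with h | h
  · exact core u v hu hv h
  · have := core v u hv hu h
    have hcomm : (v+u)/2 = (u+v)/2 := by ring
    rw [hcomm] at this; linarith

/-- Uniqueness of the user equilibrium. -/
theorem stmt_11
    (A J O : Type*) [Fintype A] [Fintype J] [Fintype O]
    (K : O → ℕ) (hK : ∀ od, 1 ≤ K od)
    (q : O → ℝ) (hq : ∀ od, 0 < q od)
    (t : A → ℝ) (ht : ∀ a, 0 ≤ t a)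
    (τ : J → ℝ) (hτ : ∀ j, 0 ≤ τ j)
    (α : ℝ) (hα : 0 < α)
    (δa : A → O → ℕ → ℝ) (δj : J → O → ℕ → ℝ)
    (hδa : ∀ a od i, δa a od i = 0 ∨ δa a od i = 1)
    (hδj : ∀ j od i, δj j od i = 0 ∨ δj j od i = 1)
    (T : J → ℝ → ℝ)
    (hTmono : ∀ j, StrictMonoOn (T j) (Set.Ici 0))
    (hTconv : ∀ j, StrictConvexOn ℝ (Set.Ici 0) (T j))
    (hTC1 : ∀ j, ContDiffOn ℝ 1 (T j) (Set.Ici 0))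
    (Ginv E : ℝ → ℝ)
    (hGinv : StrictMonoOn Ginv (Set.Icc 0 1))
    (hE : ∀ x, E x = ∫ s in (0:ℝ)..x, Ginv s)
    (θ : O → ℕ → ℝ) (hθ : ∀ od i, i + 1 < K od → θ od (i + 1) < θ od i)
    (x : (O → ℕ → ℝ) → A → ℝ)
    (hx : ∀ f a, x f a = ∑ od, ∑ i ∈ Finset.range (K od), δa a od i * f od i)
    (lam : (O → ℕ → ℝ) → J → ℝ)
    (hlam : ∀ f j, lam f j = ∑ od, ∑ i ∈ Finset.range (K od), δj j od i * f od i)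
    (Q : (O → ℕ → ℝ) → O → ℕ → ℝ)
    (hQ : ∀ f od i, Q f od i = ∑ k ∈ Finset.range i, f od k)
    (S : Set (O → ℕ → ℝ))
    (hS : S = {f | (∀ od i, i < K od → 0 ≤ f od i) ∧
      (∀ od i, K od ≤ i → f od i = 0) ∧ ∀ od, Q f od (K od) = q od})
    (F : (O → ℕ → ℝ) → ℝ)
    (hF : ∀ f, F f =
      (∑ a, x f a * t a) + α * (∑ j, lam f j * τ j)
      + (∑ j, ∫ y in (0:ℝ)..(lam f j), T j y)
      + α * ∑ od, q od * ∑ i ∈ Finset.range (K od),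
          θ od i * (E (Q f od (i + 1) / q od) - E (Q f od i / q od))) :
    ∀ f g, f ∈ S → g ∈ S → IsMinOn F S f → IsMinOn F S g →
      f = g ∧ ∀ od i, Ginv (Q f od i / q od) = Ginv (Q g od i / q od) := by
  intro f g hfS hgS hminf hming
  rw [isMinOn_iff] at hminf hming
  suffices hfg : f = g by exact ⟨hfg, by rw [hfg]; exact fun _ _ => rfl⟩
  by_contra hne
  have hfS' := hfS
  have hgS' := hgS
  rw [hS] at hfS' hgS'
  obtain ⟨hf1, hf2, hf3⟩ := hfS'
  obtain ⟨hg1, hg2, hg3⟩ := hgS'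
  set m : O → ℕ → ℝ := fun od i => (f od i + g od i)/2 with hm
  -- Q of the midpoint
  have hQm : ∀ od i, Q m od i = (Q f od i + Q g od i)/2 := by
    intro od i
    simp only [hQ]
    rw [← Finset.sum_add_distrib, Finset.sum_div]
    try exact Finset.sum_congr rfl fun k _ => by simp only [hm]; try ring
  have hQ0 : ∀ (h : O → ℕ → ℝ) od, Q h od 0 = 0 := by
    intro h od; rw [hQ]; simp
  -- m ∈ S
  have hmS : m ∈ S := by
    rw [hS]
    refine ⟨fun od i hi => ?_, fun od i hi => ?_, fun od => ?_⟩
    · have := hf1 od i hi; have := hg1 od i hi; simp only [hm]; linarith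
    · simp only [hm, hf2 od i hi, hg2 od i hi]
      norm_num
    · rw [hQm, hf3, hg3]; ring
  -- generic linearity of weighted sums at the midpoint
  have hlin : ∀ (c : O → ℕ → ℝ),
      (∑ od, ∑ i ∈ Finset.range (K od), c od i * m od i)
        = ((∑ od, ∑ i ∈ Finset.range (K od), c od i * f od i)
            + ∑ od, ∑ i ∈ Finset.range (K od), c od i * g od i)/2 := by
    intro c
    rw [← Finset.sum_add_distrib, Finset.sum_div]
    refine Finset.sum_congr rfl fun od _ => ?_
    rw [← Finset.sum_add_distrib, Finset.sum_div]
    exact Finset.sum_congr rfl fun i _ => by simp only [hm]; try ring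
  have hlamm : ∀ j, lam m j = (lam f j + lam g j)/2 := by
    intro j; rw [hlam, hlam, hlam]; exact hlin (δj j)
  -- nonnegativity of lam
  have hlamnn : ∀ (h : O → ℕ → ℝ), (∀ od i, i < K od → 0 ≤ h od i) → ∀ j, 0 ≤ lam h j := by
    intro h h1 j
    rw [hlam]
    refine Finset.sum_nonneg fun od _ => Finset.sum_nonneg fun i hi => ?_
    have hδ : 0 ≤ δj j od i := by rcases hδj j od i with h' | h' <;> rw [h'] <;> norm_num
    exact mul_nonneg hδ (h1 od i (Finset.mem_range.mp hi))
  -- Q values lie in [0, q] for i ≤ K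
  have hQmem : ∀ (h : O → ℕ → ℝ), (∀ od i, i < K od → 0 ≤ h od i) →
      (∀ od, Q h od (K od) = q od) → ∀ od i, i ≤ K od →
      Q h od i / q od ∈ Set.Icc (0:ℝ) 1 := by
    intro h h1 h3 od i hi
    have hnn : 0 ≤ Q h od i := by
      rw [hQ]
      exact Finset.sum_nonneg fun k hk =>
        h1 od k (lt_of_lt_of_le (Finset.mem_range.mp hk) hi)
    have hle : Q h od i ≤ q od := by
      rw [← h3 od, hQ, hQ]
      refine Finset.sum_le_sum_of_subset_of_nonneg (by
        intro k hk
        exact Finset.mem_range.mpr (lt_of_lt_of_le (Finset.mem_range.mp hk) hi)) ?_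
      intro k hk _
      exact h1 od k (Finset.mem_range.mp hk)
    exact ⟨div_nonneg hnn (hq od).le, (div_le_one (hq od)).mpr hle⟩
  -- existence of an index where Q f ≠ Q g
  have hex : ∃ od i, 1 ≤ i ∧ i < K od ∧ Q f od i ≠ Q g od i := by
    by_contra hno
    push_neg at hno
    apply hne
    funext od i
    by_cases hi : i < K od
    · have e1 : Q f od (i+1) = Q g od (i+1) := by
        by_cases h' : i + 1 = K od
        · rw [h', hf3, hg3]
        · exact hno od (i+1) (Nat.le_add_left 1 i)
            (Nat.lt_of_le_of_ne (Nat.succ_le_of_lt hi) h')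
      have e0 : Q f od i = Q g od i := by
        rcases Nat.eq_zero_or_pos i with h0 | h0
        · rw [h0, hQ0, hQ0]
        · exact hno od i h0 hi
      have ef : f od i = Q f od (i+1) - Q f od i := by
        rw [hQ, hQ, Finset.sum_range_succ]; ring
      have eg : g od i = Q g od (i+1) - Q g od i := by
        rw [hQ, hQ, Finset.sum_range_succ]; ring
      rw [ef, eg, e1, e0]
    · rw [hf2 od i (le_of_not_gt hi), hg2 od i (le_of_not_gt hi)]
  obtain ⟨od₀, i₀, hi₀1, hi₀K, hQne⟩ := hex
  -- part A: arc-flow cost equality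
  have hA : (∑ a, x m a * t a) = ((∑ a, x f a * t a) + ∑ a, x g a * t a)/2 := by
    rw [← Finset.sum_add_distrib, Finset.sum_div]
    refine Finset.sum_congr rfl fun a _ => ?_
    rw [hx m a, hx f a, hx g a, hlin (δa a)]; ring
  -- part B: station access cost equality
  have hB : (∑ j, lam m j * τ j) = ((∑ j, lam f j * τ j) + ∑ j, lam g j * τ j)/2 := by
    rw [← Finset.sum_add_distrib, Finset.sum_div]
    refine Finset.sum_congr rfl fun j _ => ?_
    rw [hlamm j]; ring
  have hC : (∑ j, ∫ y in (0:ℝ)..(lam m j), T j y)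
      ≤ ((∑ j, ∫ y in (0:ℝ)..(lam f j), T j y) + ∑ j, ∫ y in (0:ℝ)..(lam g j), T j y)/2 := by
    rw [← Finset.sum_add_distrib, Finset.sum_div]
    refine Finset.sum_le_sum fun j _ => ?_
    set d : ℝ := max (lam f j) (lam g j) with hd
    have hu : lam f j ∈ Set.Icc (0:ℝ) d := ⟨hlamnn f hf1 j, le_max_left _ _⟩
    have hv : lam g j ∈ Set.Icc (0:ℝ) d := ⟨hlamnn g hg1 j, le_max_right _ _⟩
    have hmono : MonotoneOn (T j) (Set.Icc (0:ℝ) d) :=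
      (hTmono j).monotoneOn.mono (fun y hy => hy.1)
    have := stmt11_mid_le hmono hu hv
    rw [hlamm j]
    exact this
  -- telescoped form of the energy term
  have tele' : ∀ (h : O → ℕ → ℝ), (∀ od, Q h od (K od) = q od) → ∀ od,
      ∑ i ∈ Finset.range (K od), θ od i * (E (Q h od (i+1) / q od) - E (Q h od i / q od))
        = ∑ i ∈ Finset.range (K od), (θ od i - θ od (i+1)) * E (Q h od (i+1) / q od)
          + (θ od (K od) * E 1 - θ od 0 * E 0) := by
    intro h h3 od
    have := stmt11_tele (θ od) (fun i => E (Q h od i / q od)) (K od)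
    rw [this, h3 od, div_self (hq od).ne', hQ0, zero_div]
    ring
  have hQmK : ∀ od, Q m od (K od) = q od := by
    intro od; rw [hQm, hf3, hg3]; ring
  -- midpoint Q over q
  have hQmid : ∀ od i, Q m od i / q od = (Q f od i / q od + Q g od i / q od)/2 := by
    intro od i; rw [hQm]; ring
  -- termwise inequality for the energy sums
  have hterm : ∀ od, ∀ i ∈ Finset.range (K od),
      (θ od i - θ od (i+1)) * E (Q m od (i+1) / q od)
        ≤ ((θ od i - θ od (i+1)) * E (Q f od (i+1) / q od)
            + (θ od i - θ od (i+1)) * E (Q g od (i+1) / q od))/2 := by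
    intro od i hi
    have hiK : i + 1 ≤ K od := Finset.mem_range.mp hi
    rcases eq_or_lt_of_le hiK with heq | hlt
    · -- last term: all E values equal E 1
      rw [heq, hf3, hg3, hQmK, div_self (hq od).ne']
      ring_nf
      exact le_refl _
    · have hθpos : 0 < θ od i - θ od (i+1) := sub_pos.mpr (hθ od i hlt)
      have hu := hQmem f hf1 hf3 od (i+1) hiK
      have hv := hQmem g hg1 hg3 od (i+1) hiK
      have hmid := stmt11_mid_le hGinv.monotoneOn hu hv
      rw [hQmid, hE, hE, hE]
      calc (θ od i - θ od (i+1)) * ∫ s in (0:ℝ)..((Q f od (i+1) / q od + Q g od (i+1) / q od)/2), Ginv s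
          ≤ (θ od i - θ od (i+1)) * (((∫ s in (0:ℝ)..(Q f od (i+1) / q od), Ginv s)
              + ∫ s in (0:ℝ)..(Q g od (i+1) / q od), Ginv s)/2) :=
            mul_le_mul_of_nonneg_left hmid hθpos.le
        _ = _ := by ring
  -- strict termwise inequality at od₀, index i₀ - 1
  have hterm0 : (θ od₀ (i₀-1) - θ od₀ (i₀-1+1)) * E (Q m od₀ (i₀-1+1) / q od₀)
      < ((θ od₀ (i₀-1) - θ od₀ (i₀-1+1)) * E (Q f od₀ (i₀-1+1) / q od₀)
          + (θ od₀ (i₀-1) - θ od₀ (i₀-1+1)) * E (Q g od₀ (i₀-1+1) / q od₀))/2 := by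
    have hsucc : i₀ - 1 + 1 = i₀ := Nat.succ_pred_eq_of_pos hi₀1
    rw [hsucc]
    have hθpos : 0 < θ od₀ (i₀-1) - θ od₀ i₀ := by
      have := hθ od₀ (i₀-1) (by rw [hsucc]; exact hi₀K)
      rw [hsucc] at this
      exact sub_pos.mpr this
    have hu := hQmem f hf1 hf3 od₀ i₀ hi₀K.le
    have hv := hQmem g hg1 hg3 od₀ i₀ hi₀K.le
    have hne' : Q f od₀ i₀ / q od₀ ≠ Q g od₀ i₀ / q od₀ := by
      intro h'
      have hq0 : q od₀ ≠ 0 := (hq od₀).ne'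
      field_simp [hq0] at h'
      exact hQne h'
    have hmid := stmt11_mid_lt hGinv hu hv hne'
    rw [hQmid, hE, hE, hE]
    calc (θ od₀ (i₀-1) - θ od₀ i₀) * ∫ s in (0:ℝ)..((Q f od₀ i₀ / q od₀ + Q g od₀ i₀ / q od₀)/2), Ginv s
        < (θ od₀ (i₀-1) - θ od₀ i₀) * (((∫ s in (0:ℝ)..(Q f od₀ i₀ / q od₀), Ginv s)
            + ∫ s in (0:ℝ)..(Q g od₀ i₀ / q od₀), Ginv s)/2) :=
          (mul_lt_mul_iff_right₀ hθpos).mpr hmid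
      _ = _ := by ring
  -- per-od energy sum inequality (non-strict)
  have hDod : ∀ od,
      ∑ i ∈ Finset.range (K od), θ od i * (E (Q m od (i+1) / q od) - E (Q m od i / q od))
        ≤ ((∑ i ∈ Finset.range (K od), θ od i * (E (Q f od (i+1) / q od) - E (Q f od i / q od)))
            + ∑ i ∈ Finset.range (K od), θ od i * (E (Q g od (i+1) / q od) - E (Q g od i / q od)))/2 := by
    intro od
    rw [tele' m hQmK od, tele' f hf3 od, tele' g hg3 od]
    have := Finset.sum_le_sum (hterm od)
    rw [← Finset.sum_div, Finset.sum_add_distrib] at this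
    linarith
  -- strict per-od inequality at od₀
  have hDod0 :
      ∑ i ∈ Finset.range (K od₀), θ od₀ i * (E (Q m od₀ (i+1) / q od₀) - E (Q m od₀ i / q od₀))
        < ((∑ i ∈ Finset.range (K od₀), θ od₀ i * (E (Q f od₀ (i+1) / q od₀) - E (Q f od₀ i / q od₀)))
            + ∑ i ∈ Finset.range (K od₀), θ od₀ i * (E (Q g od₀ (i+1) / q od₀) - E (Q g od₀ i / q od₀)))/2 := by
    rw [tele' m hQmK od₀, tele' f hf3 od₀, tele' g hg3 od₀]
    have hmem : i₀ - 1 ∈ Finset.range (K od₀) := by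
      refine Finset.mem_range.mpr ?_
      omega
    have hsum := Finset.sum_lt_sum (hterm od₀) ⟨i₀ - 1, hmem, hterm0⟩
    rw [← Finset.sum_div, Finset.sum_add_distrib] at hsum
    linarith
  -- total energy term comparison
  have hD : (∑ od, q od * ∑ i ∈ Finset.range (K od),
        θ od i * (E (Q m od (i+1) / q od) - E (Q m od i / q od)))
      < ((∑ od, q od * ∑ i ∈ Finset.range (K od),
            θ od i * (E (Q f od (i+1) / q od) - E (Q f od i / q od)))
          + ∑ od, q od * ∑ i ∈ Finset.range (K od),
            θ od i * (E (Q g od (i+1) / q od) - E (Q g od i / q od)))/2 := by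
    have hle : ∀ od ∈ (Finset.univ : Finset O),
        q od * ∑ i ∈ Finset.range (K od), θ od i * (E (Q m od (i+1) / q od) - E (Q m od i / q od))
          ≤ (q od * ∑ i ∈ Finset.range (K od), θ od i * (E (Q f od (i+1) / q od) - E (Q f od i / q od))
              + q od * ∑ i ∈ Finset.range (K od), θ od i * (E (Q g od (i+1) / q od) - E (Q g od i / q od)))/2 := by
      intro od _
      have := mul_le_mul_of_nonneg_left (hDod od) (hq od).le
      linarith
    have hlt : q od₀ * ∑ i ∈ Finset.range (K od₀), θ od₀ i * (E (Q m od₀ (i+1) / q od₀) - E (Q m od₀ i / q od₀))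
        < (q od₀ * ∑ i ∈ Finset.range (K od₀), θ od₀ i * (E (Q f od₀ (i+1) / q od₀) - E (Q f od₀ i / q od₀))
            + q od₀ * ∑ i ∈ Finset.range (K od₀), θ od₀ i * (E (Q g od₀ (i+1) / q od₀) - E (Q g od₀ i / q od₀)))/2 := by
      have := (mul_lt_mul_iff_right₀ (hq od₀)).mpr hDod0
      linarith
    have hsum := Finset.sum_lt_sum hle ⟨od₀, Finset.mem_univ od₀, hlt⟩
    rw [← Finset.sum_div, Finset.sum_add_distrib] at hsum
    linarith
  -- combine: F m < (F f + F g)/2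
  have hFm : F m < (F f + F g)/2 := by
    rw [hF m, hF f, hF g]
    have hDα := (mul_lt_mul_iff_right₀ hα).mpr hD
    have hBα : α * (∑ j, lam m j * τ j)
        = α * ((∑ j, lam f j * τ j + ∑ j, lam g j * τ j)/2) := by rw [hB]
    nlinarith [hA, hBα, hC, hDα]
  have h1 : F f ≤ F m := hminf m hmS
  have h2 : F f ≤ F g := hminf g hgS
  have h3 : F g ≤ F f := hming f hfS
  linarith
end
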